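/- Let n be a positive integer and a₀ a nonzero complex number. Let p be analytic on the open unit disk 𝔻 = {z ∈ ℂ : |z| < 1} with p(0) = a₀ and with vanishing Taylor coefficients of orders 1, …, n−1 at 0 (i.e. the k-th derivative of p at 0 is 0 for all 1 ≤ k ≤ n−1), and suppose p(z) ≠ 0 for all z ∈ 𝔻. Suppose there exists a point z₀ ∈ 𝔻 with z₀ ≠ 0 and |p(z₀)| < |a₀| such that |p(z₀)| = min over the closed disk {z : |z| ≤ |z₀|} of |p(z)|. Then the quantity z₀·p'(z₀)/p(z₀) equals −m for some real number m satisfying m ≥ n·|a₀ − p(z₀)|² / (|a₀|² − |p(z₀)|²), and moreover Re( z₀·p''(z₀)/p'(z₀) ) + 1 ≥ −m. -/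

import Mathlib

/-!
Along the circle `θ ↦ z₀ e^{iθ}` the function `‖p‖²` is minimal at `θ = 0`. Its first derivative
vanishing there makes `w = z₀ p'(z₀) / p(z₀)` real, say `w = -m`, and its second derivative being
nonnegative gives `Re (z₀² p''(z₀) / p(z₀)) ≤ m² + m`, which is the last inequality once `m > 0`.

The lower bound on `m` is a boundary Schwarz lemma. The function `h z = p(z₀) / p(z₀ z)` maps the
unit disk into the closed unit disk, `h - h 0` vanishes to order `n` at `0`, `h 1 = 1` and
`h'(1) = m`. After composing with the Blaschke factor at `β = h 0`, Schwarz's lemma of order `n`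
gives `‖g t‖ ≤ tⁿ` on `(0, 1)` while `‖g 1‖ = 1`; comparing derivatives at `t = 1` yields
`Re (g'(1) conj (g 1)) ≥ n`, which unwinds to `m ≥ n ‖1 - β‖² / (1 - ‖β‖²)`.
-/

open Metric Filter Topology Set Asymptotics Complex ComplexConjugate

theorem IsLocalMin.nonneg_of_hasDerivAt_deriv {f f' : ℝ → ℝ} {a L : ℝ} (hmin : IsLocalMin f a)
    (hf : ∀ᶠ x in 𝓝 a, HasDerivAt f (f' x) x) (hf' : HasDerivAt f' L a) : 0 ≤ L := by
  have hf'a : f' a = 0 := hmin.hasDerivAt_eq_zero hf.self_of_nhds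
  have hslope : Tendsto (fun x => f' x / (x - a)) (𝓝[≠] a) (𝓝 L) := by
    refine (hasDerivAt_iff_tendsto_slope.mp hf').congr fun x => ?_
    rw [slope_def_field, hf'a, sub_zero]
  have hq : ∀ x, HasDerivAt (fun x => (x - a) ^ 2 / 2) (x - a) x := fun x => by
    simpa using (((hasDerivAt_id x).sub_const a).pow 2).div_const 2
  have hquot : Tendsto (fun x => (f x - f a) / ((x - a) ^ 2 / 2)) (𝓝[≠] a) (𝓝 L) := by
    refine HasDerivAt.lhopital_zero_nhdsNE
      (eventually_nhdsWithin_of_eventually_nhds (hf.mono fun x hx => hx.sub_const (f a)))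
      (.of_forall fun x => hq x) (eventually_nhdsWithin_of_forall fun x hx => sub_ne_zero.2 hx)
      ?_ ?_ hslope
    · exact tendsto_sub_nhds_zero_iff.2 (hf.self_of_nhds.continuousAt.tendsto.mono_left
        nhdsWithin_le_nhds)
    · simpa using (hq a).continuousAt.tendsto.mono_left nhdsWithin_le_nhds
  refine ge_of_tendsto hquot ?_
  filter_upwards [eventually_nhdsWithin_of_eventually_nhds hmin] with x hx
  exact div_nonneg (sub_nonneg.2 hx) (by positivity)

theorem HasDerivAt.le_of_eventually_le_nhdsLT {f g : ℝ → ℝ} {f' g' a : ℝ}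
    (hf : HasDerivAt f f' a) (hg : HasDerivAt g g' a) (hfg : ∀ᶠ x in 𝓝[<] a, f x ≤ g x)
    (ha : f a = g a) : g' ≤ f' := by
  refine le_of_tendsto_of_tendsto
    ((hasDerivAt_iff_tendsto_slope.mp hg).mono_left (nhdsLT_le_nhdsNE a))
    ((hasDerivAt_iff_tendsto_slope.mp hf).mono_left (nhdsLT_le_nhdsNE a)) ?_
  filter_upwards [hfg, self_mem_nhdsWithin] with x hx hxa
  rw [slope_def_field, slope_def_field, ha]
  exact div_le_div_of_nonpos_of_le (sub_nonpos.2 (le_of_lt hxa)) (by linarith)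

theorem hasDerivAt_mul_exp_ofReal_mul_I (z₀ : ℂ) (θ : ℝ) :
    HasDerivAt (fun t : ℝ => z₀ * cexp (t * I)) (z₀ * cexp (θ * I) * I) θ := by
  simpa [mul_assoc] using (((hasDerivAt_id (θ : ℂ)).mul_const I).cexp.const_mul z₀).comp_ofReal

theorem HasDerivAt.comp_mul_exp_ofReal_mul_I {f : ℂ → ℂ} {f' z₀ : ℂ} {θ : ℝ}
    (hf : HasDerivAt f f' (z₀ * cexp (θ * I))) :
    HasDerivAt (fun t : ℝ => f (z₀ * cexp (t * I))) (f' * (z₀ * cexp (θ * I) * I)) θ :=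
  hf.comp θ (hasDerivAt_mul_exp_ofReal_mul_I z₀ θ)

theorem im_eq_zero_and_re_le_of_isLocalMin_norm_circle {f : ℂ → ℂ} {z₀ : ℂ}
    (hf : AnalyticAt ℂ f z₀) (hf₀ : f z₀ ≠ 0)
    (hmin : IsLocalMin (fun θ : ℝ => ‖f (z₀ * cexp (θ * I))‖) 0) :
    (z₀ * deriv f z₀ / f z₀).im = 0 ∧
      (z₀ ^ 2 * deriv (deriv f) z₀ / f z₀).re ≤
        ‖z₀ * deriv f z₀ / f z₀‖ ^ 2 - (z₀ * deriv f z₀ / f z₀).re := by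
  set a := f z₀
  set w := z₀ * deriv f z₀ / a
  set γ : ℝ → ℂ := fun t => z₀ * cexp (t * I)
  have hγ0 : γ 0 = z₀ := by simp [γ]
  set F : ℝ → ℂ := fun t => f (γ t) / a
  set F' : ℝ → ℂ := fun t => deriv f (γ t) * (γ t * I) / a
  set F'' : ℂ := (deriv (deriv f) z₀ * (z₀ * I) * (z₀ * I) + deriv f z₀ * (z₀ * I * I)) / a
  have hF : ∀ᶠ t in 𝓝 0, HasDerivAt F (F' t) t := by
    have hγ : Tendsto γ (𝓝 0) (𝓝 z₀) :=
      hγ0 ▸ (hasDerivAt_mul_exp_ofReal_mul_I z₀ 0).continuousAt.tendsto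
    filter_upwards [hγ.eventually hf.eventually_analyticAt] with t ht
    exact (ht.differentiableAt.hasDerivAt.comp_mul_exp_ofReal_mul_I).div_const a
  have hF' : HasDerivAt F' F'' 0 := by
    have h1 : HasDerivAt (fun t : ℝ => deriv f (γ t)) _ 0 :=
      (hγ0 ▸ hf.deriv.differentiableAt.hasDerivAt).comp_mul_exp_ofReal_mul_I
    have h2 := (hasDerivAt_mul_exp_ofReal_mul_I z₀ 0).mul_const I
    refine ((h1.fun_mul h2).div_const a).congr_deriv ?_
    simp [F'', hγ0]
  have hψ : IsLocalMin (fun t => ‖F t‖ ^ 2) 0 := by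
    filter_upwards [hmin] with t ht
    simp only [F, norm_div]
    gcongr
  have hfirst := hψ.hasDerivAt_eq_zero hF.self_of_nhds.norm_sq
  have hsecond := hψ.nonneg_of_hasDerivAt_deriv (hF.mono fun t ht => ht.norm_sq)
    ((hF.self_of_nhds.inner ℝ hF').const_mul 2)
  have hF0 : F 0 = 1 := by simp [F, hγ0, a, hf₀]
  have hF'0 : F' 0 = w * I := by simp [F', hγ0, w]; ring
  have hF''w : F'' = -(z₀ ^ 2 * deriv (deriv f) z₀ / a) - w := by
    simp only [F'', w]
    linear_combination (z₀ ^ 2 * deriv (deriv f) z₀ + z₀ * deriv f z₀) / a * I_sq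
  simp only [hF0, hF'0, hF''w, Complex.inner, real_inner_self_eq_norm_sq, map_one, mul_one,
    mul_I_re, norm_mul, norm_I, sub_re, neg_re] at hfirst hsecond
  constructor <;> linarith

noncomputable def blaschkeFactor (β w : ℂ) : ℂ := (w - β) / (1 - conj β * w)

section blaschkeFactor

variable {β w : ℂ}

theorem one_sub_conj_mul_ne_zero (hβ : ‖β‖ < 1) (hw : ‖w‖ ≤ 1) : 1 - conj β * w ≠ 0 := by
  refine sub_ne_zero.2 fun h => ?_
  have : ‖conj β * w‖ < 1 := by
    rw [norm_mul, norm_conj]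
    exact mul_lt_one_of_nonneg_of_lt_one_left (norm_nonneg _) hβ hw
  rw [← h, norm_one] at this
  exact lt_irrefl _ this

theorem sq_norm_one_sub_conj_mul_sub_sq_norm_sub (β w : ℂ) :
    ‖1 - conj β * w‖ ^ 2 - ‖w - β‖ ^ 2 = (1 - ‖β‖ ^ 2) * (1 - ‖w‖ ^ 2) := by
  simp only [← normSq_eq_norm_sq, normSq_apply, sub_re, sub_im, mul_re, mul_im, conj_re,
    conj_im, one_re, one_im]
  ring

theorem norm_blaschkeFactor_le_one (hβ : ‖β‖ < 1) (hw : ‖w‖ ≤ 1) :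
    ‖blaschkeFactor β w‖ ≤ 1 := by
  have hden := norm_pos_iff.2 (one_sub_conj_mul_ne_zero hβ hw)
  rw [blaschkeFactor, norm_div, div_le_one hden]
  have hid := sq_norm_one_sub_conj_mul_sub_sq_norm_sub β w
  have hprod : 0 ≤ (1 - ‖β‖ ^ 2) * (1 - ‖w‖ ^ 2) := by
    apply mul_nonneg <;> nlinarith [norm_nonneg β, norm_nonneg w]
  nlinarith [norm_nonneg (w - β)]

@[simp]
theorem blaschkeFactor_self (β : ℂ) : blaschkeFactor β β = 0 := by
  simp [blaschkeFactor]

theorem norm_blaschkeFactor_one (hβ : β ≠ 1) : ‖blaschkeFactor β 1‖ = 1 := by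
  rw [blaschkeFactor, mul_one, norm_div, show 1 - conj β = conj (1 - β) by simp, norm_conj,
    div_self (norm_ne_zero_iff.2 (sub_ne_zero.2 hβ.symm))]

theorem hasDerivAt_blaschkeFactor (hw : 1 - conj β * w ≠ 0) :
    HasDerivAt (blaschkeFactor β) ((1 - ‖β‖ ^ 2) / (1 - conj β * w) ^ 2) w := by
  refine (((hasDerivAt_id w).sub_const β).div
    (((hasDerivAt_id w).const_mul (conj β)).const_sub 1) hw).congr_deriv ?_
  rw [← conj_mul']
  simp only [id]
  ring

end blaschkeFactor

theorem natCast_le_re_mul_conj_of_mapsTo_ball {g : ℂ → ℂ} {g' : ℂ} {n : ℕ} (hn : 0 < n)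
    (hd : DifferentiableOn ℂ g (ball 0 1)) (hmaps : MapsTo g (ball 0 1) (closedBall 0 1))
    (hg0 : g 0 = 0) (hord : g =O[𝓝 0] (· ^ n)) (hg1 : ‖g 1‖ = 1) (hg' : HasDerivAt g g' 1) :
    (n : ℝ) ≤ (g' * conj (g 1)).re := by
  have hschwarz : ∀ z ∈ ball (0 : ℂ) 1, ‖g z‖ ≤ ‖z‖ ^ n := by
    intro z hz
    have hlo : (g · - g 0) =o[𝓝 0] fun w => ‖w - 0‖ ^ (n - 1) := by
      simpa [hg0] using
        (hord.trans_isLittleO (isLittleO_pow_pow (Nat.sub_lt hn one_pos))).norm_right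
    simpa [hg0, Nat.sub_add_cancel hn] using
      dist_le_mul_div_pow_of_mapsTo_ball_of_isLittleO hd (R₂ := 1) (by rwa [hg0]) hlo hz
  have hle : ∀ᶠ t : ℝ in 𝓝[<] 1, ‖g t‖ ^ 2 ≤ (t ^ n) ^ 2 := by
    filter_upwards [Ioo_mem_nhdsLT one_pos] with t ht
    gcongr
    simpa [abs_of_pos ht.1] using hschwarz t (by simpa [abs_of_pos ht.1] using ht.2)
  have hpow : HasDerivAt (fun t : ℝ => (t ^ n) ^ 2) (2 * n) 1 := by
    simpa using (hasDerivAt_pow n (1 : ℝ)).fun_pow 2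
  have hcmp := (hg'.comp_ofReal (z := 1)).norm_sq.le_of_eventually_le_nhdsLT hpow hle
    (by simp [hg1])
  simp only [ofReal_one, Complex.inner] at hcmp
  linarith

theorem le_re_of_mapsTo_ball_of_apply_one {h : ℂ → ℂ} {h' : ℂ} {n : ℕ} (hn : 0 < n)
    (hd : DifferentiableOn ℂ h (ball 0 1)) (hmaps : MapsTo h (ball 0 1) (closedBall 0 1))
    (h0 : ‖h 0‖ < 1) (hord : (fun z => h z - h 0) =O[𝓝 0] (· ^ n)) (h1 : h 1 = 1)
    (hh' : HasDerivAt h h' 1) :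
    n * ‖1 - h 0‖ ^ 2 / (1 - ‖h 0‖ ^ 2) ≤ h'.re := by
  set β := h 0
  have hden : ∀ z ∈ ball (0 : ℂ) 1, 1 - conj β * h z ≠ 0 := fun z hz =>
    one_sub_conj_mul_ne_zero h0 (by simpa using hmaps hz)
  have hβ1 : 1 - β ≠ 0 := sub_ne_zero.2 fun hβ => by simp [← hβ] at h0
  have hgd : DifferentiableOn ℂ (blaschkeFactor β ∘ h) (ball 0 1) :=
    (hd.sub_const β).div ((hd.const_mul _).const_sub 1) hden
  have hgmaps : MapsTo (blaschkeFactor β ∘ h) (ball 0 1) (closedBall 0 1) := fun z hz => by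
    simpa using norm_blaschkeFactor_le_one h0 (by simpa using hmaps hz)
  have hgord : (blaschkeFactor β ∘ h) =O[𝓝 0] (· ^ n) := by
    have hcont : ContinuousAt (fun z => (1 - conj β * h z)⁻¹) 0 :=
      ((continuousAt_const.mul (hd.continuousOn.continuousAt (ball_mem_nhds 0 one_pos))).const_sub
        1).inv₀ (hden 0 (mem_ball_self one_pos))
    refine (hord.mul (hcont.tendsto.isBigO_one ℂ)).congr (fun z => ?_) fun z => mul_one _
    simp [blaschkeFactor, div_eq_mul_inv]
  have hg' : HasDerivAt (blaschkeFactor β ∘ h) ((1 - ‖β‖ ^ 2) / (1 - conj β) ^ 2 * h') 1 := by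
    have hB := hasDerivAt_blaschkeFactor (β := β) (w := h 1)
      (one_sub_conj_mul_ne_zero h0 (by simp [h1]))
    simpa [h1] using hB.comp 1 hh'
  have hjulia := natCast_le_re_mul_conj_of_mapsTo_ball hn hgd hgmaps (by simp [β]) hgord
    (by simpa [h1] using norm_blaschkeFactor_one (sub_ne_zero.1 hβ1).symm) hg'
  have hβ1' : 1 - conj β ≠ 0 := by simpa using (map_ne_zero (starRingEnd ℂ)).2 hβ1
  have key : (1 - ‖β‖ ^ 2) / (1 - conj β) ^ 2 * h' * conj ((blaschkeFactor β ∘ h) 1)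
      = h' * (((1 - ‖β‖ ^ 2) / ‖1 - β‖ ^ 2 : ℝ) : ℂ) := by
    push_cast
    rw [← mul_conj' (1 - β), Function.comp_apply, h1, blaschkeFactor]
    simp only [map_div₀, map_sub, map_one, conj_conj, mul_one]
    field_simp
  rw [key, re_mul_ofReal, mul_div_assoc', le_div_iff₀ (by positivity)] at hjulia
  rwa [div_le_iff₀ (by nlinarith [norm_nonneg β])]

theorem AnalyticAt.isBigO_sub_pow_of_iteratedDeriv_eq_zero {𝕜 E : Type*}
    [NontriviallyNormedField 𝕜] [CharZero 𝕜] [NormedAddCommGroup E] [NormedSpace 𝕜 E]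
    [CompleteSpace E] {f : 𝕜 → E} {z₀ : 𝕜} {n : ℕ} (hf : AnalyticAt 𝕜 f z₀)
    (h : ∀ k < n, iteratedDeriv k f z₀ = 0) : f =O[𝓝 z₀] fun z => (z - z₀) ^ n := by
  obtain ⟨g, hg, hfg⟩ := (natCast_le_analyticOrderAt hf).1
    ((natCast_le_analyticOrderAt_iff_iteratedDeriv_eq_zero hf).2 h)
  refine EventuallyEq.trans_isBigO hfg ?_
  simpa using (isBigO_refl (fun z => (z - z₀) ^ n) (𝓝 z₀)).smul
    (hg.continuousAt.tendsto.isBigO_one 𝕜)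

theorem mul_norm_sub_sq_div_le_neg_re_of_forall_norm_le {p : ℂ → ℂ} {z₀ : ℂ} {n : ℕ} (hn : 0 < n)
    (hp : DifferentiableOn ℂ p (ball 0 1)) (hne : ∀ z ∈ ball (0 : ℂ) 1, p z ≠ 0)
    (hord : (fun z => p z - p 0) =O[𝓝 0] (· ^ n)) (hz₀ : z₀ ∈ ball (0 : ℂ) 1)
    (hlt : ‖p z₀‖ < ‖p 0‖) (hmin : ∀ z ∈ closedBall (0 : ℂ) ‖z₀‖, ‖p z₀‖ ≤ ‖p z‖) :
    n * ‖p 0 - p z₀‖ ^ 2 / (‖p 0‖ ^ 2 - ‖p z₀‖ ^ 2) ≤ -(z₀ * deriv p z₀ / p z₀).re := by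
  have hz₀1 : ‖z₀‖ < 1 := by simpa using hz₀
  have hmul : ∀ z ∈ closedBall (0 : ℂ) 1, z₀ * z ∈ closedBall (0 : ℂ) ‖z₀‖ := fun z hz => by
    simpa using mul_le_of_le_one_right (norm_nonneg z₀) (by simpa using hz)
  have hmul' : ∀ z ∈ closedBall (0 : ℂ) 1, z₀ * z ∈ ball (0 : ℂ) 1 := fun z hz => by
    simpa using (mem_closedBall_zero_iff.1 (hmul z hz)).trans_lt hz₀1
  have hp0 : p 0 ≠ 0 := norm_pos_iff.1 ((norm_pos_iff.2 (hne z₀ hz₀)).trans hlt)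
  set h : ℂ → ℂ := fun z => p z₀ / p (z₀ * z)
  have hd : DifferentiableOn ℂ h (ball 0 1) := fun z hz =>
    have hz' := hmul' z (ball_subset_closedBall hz)
    ((differentiableAt_const _).div ((hp.differentiableAt (isOpen_ball.mem_nhds hz')).comp z
      ((differentiableAt_id).const_mul z₀)) (hne _ hz')).differentiableWithinAt
  have hmaps : MapsTo h (ball 0 1) (closedBall 0 1) := fun z hz => by
    have hz' := ball_subset_closedBall hz
    rw [mem_closedBall_zero_iff, norm_div, div_le_one (norm_pos_iff.2 (hne _ (hmul' z hz')))]
    exact hmin _ (hmul z hz')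
  have h0 : h 0 = p z₀ / p 0 := by simp [h]
  have hord' : (fun z => h z - h 0) =O[𝓝 0] (· ^ n) := by
    have hP : ContinuousAt (fun z => p (z₀ * z)) 0 := by
      have : ContinuousAt p (z₀ * 0) := by
        simpa using (hp.differentiableAt (ball_mem_nhds 0 one_pos)).continuousAt
      exact this.comp (by fun_prop)
    have hk : ContinuousAt (fun z => -p z₀ / (p 0 * p (z₀ * z))) 0 :=
      continuousAt_const.div (continuousAt_const.mul hP) (by simp [hp0])
    have htend : Tendsto (z₀ * ·) (𝓝 0) (𝓝 0) := by
      simpa using ((continuous_const_mul z₀).tendsto 0)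
    have hpow : (fun z => p (z₀ * z) - p 0) =O[𝓝 0] (· ^ n) :=
      (hord.comp_tendsto htend).trans ((isBigO_const_mul_self (z₀ ^ n) (· ^ n) _).congr_left
        fun z => by simp [mul_pow])
    refine (hpow.mul (hk.tendsto.isBigO_one ℂ)).congr' ?_ (.of_forall fun z => mul_one _)
    filter_upwards [hP.eventually_ne (by simpa using hp0)] with z hz
    simp only [h, mul_zero]
    field_simp
    ring
  have hh' : HasDerivAt h (-(z₀ * deriv p z₀ / p z₀)) 1 := by
    have hpd : HasDerivAt p (deriv p z₀) (z₀ * 1) := by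
      rw [mul_one]; exact (hp.differentiableAt (isOpen_ball.mem_nhds hz₀)).hasDerivAt
    refine ((hasDerivAt_const (1 : ℂ) (p z₀)).div (hpd.comp 1 ((hasDerivAt_id 1).const_mul z₀))
      (by simpa using hne z₀ hz₀)).congr_deriv ?_
    simp only [Function.comp_apply, mul_one]
    field_simp
    ring
  have hschwarz := le_re_of_mapsTo_ball_of_apply_one hn hd hmaps
    (by rwa [h0, norm_div, div_lt_one (norm_pos_iff.2 hp0)]) hord' (by simp [h, hne z₀ hz₀]) hh'
  rw [h0, one_sub_div hp0, norm_div, norm_div, div_pow, div_pow, neg_re] at hschwarz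
  convert hschwarz using 1
  field_simp

theorem neg_le_re_mul_div_add_one {a b c z₀ : ℂ} {m : ℝ} (ha : a ≠ 0) (hm : 0 < m)
    (hw : z₀ * b / a = -m) (hc : (z₀ ^ 2 * c / a).re ≤ ‖z₀ * b / a‖ ^ 2 - (z₀ * b / a).re) :
    -m ≤ (z₀ * c / b).re + 1 := by
  have hzb : z₀ * b ≠ 0 := by
    rw [← div_mul_cancel₀ (z₀ * b) ha, hw]
    exact mul_ne_zero (neg_ne_zero.2 (ofReal_ne_zero.2 hm.ne')) ha
  have hq : z₀ * c / b = z₀ ^ 2 * c / a / -(m : ℂ) := by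
    rw [← hw]
    field_simp [left_ne_zero_of_mul hzb, right_ne_zero_of_mul hzb]
  rw [hw, norm_neg, norm_real, Real.norm_eq_abs, sq_abs, neg_re, ofReal_re] at hc
  rw [hq, div_neg, neg_re, div_ofReal_re]
  have hdiv : (z₀ ^ 2 * c / a).re / m ≤ m + 1 := by
    rw [div_le_iff₀ hm]
    nlinarith
  linarith

theorem shiraishi_owa_min_principle_general
    (n : ℕ) (hn : 0 < n) (a₀ : ℂ)
    (p : ℂ → ℂ)
    (hp : DifferentiableOn ℂ p (ball (0 : ℂ) 1))
    (hp0 : p 0 = a₀)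
    (hder : ∀ k : ℕ, 1 ≤ k → k ≤ n - 1 → iteratedDeriv k p 0 = 0)
    (hne : ∀ z ∈ ball (0 : ℂ) 1, p z ≠ 0)
    (z₀ : ℂ) (hz₀ : z₀ ∈ ball (0 : ℂ) 1)
    (hlt : ‖p z₀‖ < ‖a₀‖)
    (hmin : ∀ z ∈ closedBall (0 : ℂ) (‖z₀‖),
      ‖p z₀‖ ≤ ‖p z‖) :
    ∃ m : ℝ,
      m ≥ (n : ℝ) * ‖a₀ - p z₀‖ ^ 2 /
        (‖a₀‖ ^ 2 - ‖p z₀‖ ^ 2) ∧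
      z₀ * deriv p z₀ / p z₀ = -(m : ℂ) ∧
      (z₀ * deriv (deriv p) z₀ / deriv p z₀).re + 1 ≥ -m := by
  subst hp0
  have hpa : AnalyticOnNhd ℂ p (ball 0 1) := hp.analyticOnNhd isOpen_ball
  have hord : (fun z => p z - p 0) =O[𝓝 0] (· ^ n) := by
    suffices h : ∀ k < n, iteratedDeriv k (fun z => p z - p 0) 0 = 0 by
      simpa using ((hpa 0 (mem_ball_self one_pos)).fun_sub
        analyticAt_const).isBigO_sub_pow_of_iteratedDeriv_eq_zero h
    intro k hk
    rcases k with _ | k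
    · simp
    · rw [iteratedDeriv_succ', show deriv (fun z => p z - p 0) = deriv p from
        funext fun z => deriv_sub_const _, ← iteratedDeriv_succ']
      exact hder _ (by omega) (by omega)
  have hbound := mul_norm_sub_sq_div_le_neg_re_of_forall_norm_le hn hp hne hord hz₀ hlt hmin
  obtain ⟨him, hre⟩ := im_eq_zero_and_re_le_of_isLocalMin_norm_circle (hpa z₀ hz₀) (hne z₀ hz₀)
    (.of_forall fun θ => by simpa using hmin (z₀ * cexp (θ * I)) (by simp))
  set w := z₀ * deriv p z₀ / p z₀
  have hw : w = -((-w.re : ℝ) : ℂ) := by apply Complex.ext <;> simp [him]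
  have hm : 0 < -w.re := by
    refine lt_of_lt_of_le (div_pos (mul_pos (by exact_mod_cast hn) (pow_pos ?_ 2)) ?_) hbound
    · exact norm_pos_iff.2 (sub_ne_zero.2 fun h => (h ▸ hlt).false)
    · nlinarith [norm_nonneg (p z₀)]
  exact ⟨-w.re, hbound, hw, neg_le_re_mul_div_add_one (hne z₀ hz₀) hm hw hre⟩

/-- Shiraishi–Owa lemma: if `p ∈ ℋ[a₀, n]` is nonvanishing on the unit disk and `|p|`
attains its minimum over the closed disk `|z| ≤ |z₀|` at `z₀`, then
`z₀ p'(z₀)/p(z₀) = -m` with `m ≥ n |a₀ - p(z₀)|² / (|a₀|² - |p(z₀)|²)` and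
`Re(z₀ p''(z₀)/p'(z₀)) + 1 ≥ -m`. -/
theorem shiraishi_owa_min_principle
    (n : ℕ) (hn : 0 < n) (a₀ : ℂ) (ha₀ : a₀ ≠ 0)
    (p : ℂ → ℂ)
    (hp : DifferentiableOn ℂ p (ball (0 : ℂ) 1))
    (hp0 : p 0 = a₀)
    (hder : ∀ k : ℕ, 1 ≤ k → k ≤ n - 1 → iteratedDeriv k p 0 = 0)
    (hne : ∀ z ∈ ball (0 : ℂ) 1, p z ≠ 0)
    (z₀ : ℂ) (hz₀ : z₀ ∈ ball (0 : ℂ) 1) (hz₀ne : z₀ ≠ 0)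
    (hlt : ‖p z₀‖ < ‖a₀‖)
    (hmin : ∀ z ∈ closedBall (0 : ℂ) (‖z₀‖),
      ‖p z₀‖ ≤ ‖p z‖) :
    ∃ m : ℝ,
      m ≥ (n : ℝ) * ‖a₀ - p z₀‖ ^ 2 /
        (‖a₀‖ ^ 2 - ‖p z₀‖ ^ 2) ∧
      z₀ * deriv p z₀ / p z₀ = -(m : ℂ) ∧
      (z₀ * deriv (deriv p) z₀ / deriv p z₀).re + 1 ≥ -m :=
  shiraishi_owa_min_principle_general n hn a₀ p hp hp0 hder hne z₀ hz₀ hlt hmin
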